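/- Let (K,v) be a henselian valued field of residue characteristic p > 0, let t ∈ O_v be such that the residue t̄ is not a p-th power in Kv. If a ∈ K satisfies v(a) > 0, then there is no field extension L of K with [L:K] < p containing an element y with y^p − a·y = t. -/

import Mathlib

/-!
The residue of `a` vanishes, so `X ^ p - a X - t` reduces to `X ^ p - t̄`, which is irreducible
over the residue field because `t̄` is not a `p`-th power. A monic polynomial with irreducible
reduction is irreducible over the valuation ring, hence, by Gauss's lemma for the integrally
closed ring `O`, over `K`. It is then the minimal polynomial of `y`, so `y` has degree `p` over `K`.
-/

open Polynomial

section FractionField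

variable {R K L S : Type*} [CommRing R] [IsDomain R] [IsIntegrallyClosed R] [Field K]
  [Algebra R K] [IsFractionRing R K] [Field L] [Algebra K L] [FiniteDimensional K L]
  [CommRing S] [IsDomain S]

theorem Polynomial.Monic.natDegree_le_finrank_of_irreducible_map {F : R[X]} (hF : F.Monic)
    (f : R →+* S) (hirr : Irreducible (F.map f)) {y : L}
    (hy : aeval y (F.map (algebraMap R K)) = 0) : F.natDegree ≤ Module.finrank K L := by
  have hirrK : Irreducible (F.map (algebraMap R K)) :=
    hF.irreducible_iff_irreducible_map_fraction_map.1 (hF.irreducible_of_irreducible_map f F hirr)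
  calc F.natDegree = (F.map (algebraMap R K)).natDegree := (hF.natDegree_map _).symm
    _ = (minpoly K y).natDegree := by rw [minpoly.eq_of_irreducible_of_monic hirrK hy (hF.map _)]
    _ ≤ Module.finrank K L := minpoly.natDegree_le y

end FractionField

section Trinomial

variable {R : Type*} [CommRing R] {n : ℕ}

theorem Polynomial.monic_X_pow_sub_C_mul_X_sub_C (hn : 1 < n) (a b : R) :
    (X ^ n - C a * X - C b).Monic := by
  rw [sub_sub]
  exact monic_X_pow_sub (degree_linear_le.trans_lt (mod_cast hn))

theorem Polynomial.natDegree_X_pow_sub_C_mul_X_sub_C [Nontrivial R] (hn : 1 < n) (a b : R) :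
    (X ^ n - C a * X - C b).natDegree = n := by
  have hlin : (C a * X + C b).natDegree < (X ^ n : R[X]).natDegree := by
    rw [natDegree_X_pow]
    exact natDegree_linear_le.trans_lt hn
  rw [sub_sub, natDegree_sub_eq_left_of_natDegree_lt hlin, natDegree_X_pow]

theorem IsLocalRing.map_residue_X_pow_sub_C_mul_X_sub_C [IsLocalRing R] {a : R}
    (ha : a ∈ IsLocalRing.maximalIdeal R) (b : R) :
    (X ^ n - C a * X - C b).map (IsLocalRing.residue R) =
      X ^ n - C (IsLocalRing.residue R b) := by
  simp [(IsLocalRing.residue_eq_zero_iff a).2 ha]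

end Trinomial

theorem no_root_in_small_extension_general
    (K : Type*) [Field K] (O : ValuationSubring K)
    (p : ℕ) [Fact p.Prime]
    (t : K) (ht : t ∈ O)
    (htp : ∀ s : IsLocalRing.ResidueField ↥O,
      s ^ p ≠ IsLocalRing.residue ↥O ⟨t, ht⟩)
    (a : K) (ha : O.valuation a < 1) :
    ¬ ∃ L : IntermediateField K (AlgebraicClosure K), FiniteDimensional K ↥L ∧
        Module.finrank K ↥L < p ∧
        ∃ y : ↥L, y ^ p - (algebraMap K ↥L a) * y = algebraMap K ↥L t := by
  rintro ⟨L, hfin, hdim, y, hy⟩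
  have hp : 1 < p := (Fact.out : p.Prime).one_lt
  have haO : a ∈ O := O.mem_of_valuation_le_one a ha.le
  let F : O[X] := X ^ p - C ⟨a, haO⟩ * X - C ⟨t, ht⟩
  have hred : Irreducible (F.map (IsLocalRing.residue O)) := by
    rw [IsLocalRing.map_residue_X_pow_sub_C_mul_X_sub_C ((O.valuation_lt_one_iff _).2 ha)]
    exact X_pow_sub_C_irreducible_of_prime Fact.out htp
  have hroot : aeval y (F.map (algebraMap O K)) = 0 := by
    simp [F, hy]
  have hdeg : F.natDegree ≤ Module.finrank K L :=
    (monic_X_pow_sub_C_mul_X_sub_C hp _ _).natDegree_le_finrank_of_irreducible_map _ hred hroot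
  rw [natDegree_X_pow_sub_C_mul_X_sub_C hp] at hdeg
  exact hdim.not_ge hdeg

/-- Let (K,v) be a henselian valued field of residue characteristic p > 0, let t ∈ O_v be
such that the residue t̄ is not a p-th power in the residue field Kv.  If a ∈ K satisfies
v(a) > 0, then there is no field extension L of K with [L:K] < p containing an element y
with y^p − a·y = t.

Multiplicatively, v(a) > 0 is `O.valuation a < 1`.  Any extension L as above is algebraic
over K, so extensions are taken inside a fixed algebraic closure. -/
theorem no_root_in_small_extension
    (K : Type*) [Field K] (O : ValuationSubring K) [HenselianLocalRing ↥O]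
    (p : ℕ) [Fact p.Prime] [CharP (IsLocalRing.ResidueField ↥O) p]
    (t : K) (ht : t ∈ O)
    (htp : ∀ s : IsLocalRing.ResidueField ↥O,
      s ^ p ≠ IsLocalRing.residue ↥O ⟨t, ht⟩)
    (a : K) (ha : O.valuation a < 1) :
    ¬ ∃ L : IntermediateField K (AlgebraicClosure K), FiniteDimensional K ↥L ∧
        Module.finrank K ↥L < p ∧
        ∃ y : ↥L, y ^ p - (algebraMap K ↥L a) * y = algebraMap K ↥L t :=
  no_root_in_small_extension_general K O p t ht htp a ha
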